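/- The number of plane trees on n edges with root degree r equals (r/n)*C(2n-1-r, n-1), for n >= r >= 1. -/

import Mathlib

inductive PlaneTree : Type
  | node : List PlaneTree → PlaneTree

namespace PlaneTree

def edges : PlaneTree → ℕ
  | node ts => (ts.attach.map (fun t => edges t.1)).sum + ts.length
decreasing_by have := List.sizeOf_lt_of_mem t.2; simp [PlaneTree.node.sizeOf_spec]; omega

def leafAux : PlaneTree → ℕ
  | node ts => (if ts.length = 0 then 1 else 0) + (ts.attach.map (fun t => leafAux t.1)).sum
decreasing_by have := List.sizeOf_lt_of_mem t.2; simp [PlaneTree.node.sizeOf_spec]; omega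

def internalAux : PlaneTree → ℕ
  | node ts => (if ts.length = 1 then 1 else 0) + (ts.attach.map (fun t => internalAux t.1)).sum
decreasing_by have := List.sizeOf_lt_of_mem t.2; simp [PlaneTree.node.sizeOf_spec]; omega

/-- number of leaves: non-root vertices of down degree 0 -/
def leaves : PlaneTree → ℕ
  | node ts => (ts.map leafAux).sum

/-- number of internal nodes: non-root vertices of down degree 1 -/
def internals : PlaneTree → ℕ
  | node ts => (ts.map internalAux).sum

def rootDegree : PlaneTree → ℕ
  | node ts => ts.length

end PlaneTree

/-!
A tree with root degree `r + 1` either has a leaf as first child of the root, which can be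
deleted, or the first child of the root has a first child `a`, which can be detached and made
the new first child of the root. This gives a bijection proving the ballot recurrence
`T(n+1, r+1) = T(n, r) + T(n+1, r+2)` for the counts `T(n, r)`; with `T(n, n) = 1` and
`T(n+1, 0) = 0` it yields `T(n, r) = C(2n-1-r, n-1) - C(2n-1-r, n)`, and the theorem follows
from `n * C(2n-1-r, n) = (n - r) * C(2n-1-r, n-1)`.
-/

namespace PlaneTree

@[simp]
lemma edges_node (ts : List PlaneTree) : edges (node ts) = (ts.map edges).sum + ts.length := by
  rw [edges]; congr 1; simp

@[simp]
lemma rootDegree_node (ts : List PlaneTree) : rootDegree (node ts) = ts.length := rfl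

lemma rootDegree_le_edges (t : PlaneTree) : t.rootDegree ≤ t.edges := by
  obtain ⟨ts⟩ := t; simp

lemma eq_node_nil_of_rootDegree_eq_zero {t : PlaneTree} (h : t.rootDegree = 0) : t = node [] := by
  obtain ⟨ts⟩ := t; simpa using h

def consLeaf : PlaneTree → PlaneTree
  | node ts => node (node [] :: ts)

def graftFirstChild : PlaneTree → PlaneTree
  | node (a :: node bs :: rest) => node (node (a :: bs) :: rest)
  | t => t

@[simp]
lemma edges_consLeaf (t : PlaneTree) : (consLeaf t).edges = t.edges + 1 := by
  obtain ⟨ts⟩ := t; simp [consLeaf]; omega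

@[simp]
lemma rootDegree_consLeaf (t : PlaneTree) : (consLeaf t).rootDegree = t.rootDegree + 1 := by
  obtain ⟨ts⟩ := t; simp [consLeaf]

lemma consLeaf_injective : Function.Injective consLeaf := by
  rintro ⟨ss⟩ ⟨ts⟩ h; simpa [consLeaf] using h

lemma exists_eq_node_cons_node_cons {t : PlaneTree} (h : 2 ≤ t.rootDegree) :
    ∃ a bs rest, t = node (a :: node bs :: rest) := by
  obtain ⟨_ | ⟨a, _ | ⟨⟨bs⟩, rest⟩⟩⟩ := t
  all_goals first | exact ⟨a, bs, rest, rfl⟩ | simp at h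

lemma edges_graftFirstChild {t : PlaneTree} (h : 2 ≤ t.rootDegree) :
    (graftFirstChild t).edges = t.edges := by
  obtain ⟨a, bs, rest, rfl⟩ := exists_eq_node_cons_node_cons h
  simp [graftFirstChild]; omega

lemma rootDegree_graftFirstChild {t : PlaneTree} (h : 2 ≤ t.rootDegree) :
    (graftFirstChild t).rootDegree = t.rootDegree - 1 := by
  obtain ⟨a, bs, rest, rfl⟩ := exists_eq_node_cons_node_cons h
  simp [graftFirstChild]

lemma graftFirstChild_injOn : Set.InjOn graftFirstChild {t | 2 ≤ t.rootDegree} := by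
  intro s hs t ht h
  obtain ⟨a, bs, rest, rfl⟩ := exists_eq_node_cons_node_cons hs
  obtain ⟨a', bs', rest', rfl⟩ := exists_eq_node_cons_node_cons ht
  simp_all [graftFirstChild]

lemma consLeaf_ne_graftFirstChild (s : PlaneTree) {t : PlaneTree} (ht : 2 ≤ t.rootDegree) :
    consLeaf s ≠ graftFirstChild t := by
  obtain ⟨a, bs, rest, rfl⟩ := exists_eq_node_cons_node_cons ht
  obtain ⟨ss⟩ := s
  simp [consLeaf, graftFirstChild]

lemma exists_consLeaf_or_graftFirstChild {t : PlaneTree} (ht : 1 ≤ t.rootDegree) :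
    (∃ s, consLeaf s = t) ∨ ∃ s, 2 ≤ s.rootDegree ∧ graftFirstChild s = t := by
  obtain ⟨_ | ⟨⟨_ | ⟨a, as⟩⟩, rest⟩⟩ := t
  · simp at ht
  · exact .inl ⟨node rest, rfl⟩
  · exact .inr ⟨node (a :: node as :: rest), by simp, rfl⟩

abbrev WithEdgesRootDegree (n r : ℕ) : Type := {T : PlaneTree // T.edges = n ∧ T.rootDegree = r}

instance (n : ℕ) : Subsingleton (WithEdgesRootDegree n 0) :=
  ⟨fun s t => Subtype.ext <|
    (eq_node_nil_of_rootDegree_eq_zero s.2.2).trans (eq_node_nil_of_rootDegree_eq_zero t.2.2).symm⟩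

lemma isEmpty_withEdgesRootDegree_of_lt {n r : ℕ} (h : n < r) :
    IsEmpty (WithEdgesRootDegree n r) :=
  ⟨fun t => by have := rootDegree_le_edges t.1; omega⟩

lemma isEmpty_withEdgesRootDegree_succ_zero (n : ℕ) :
    IsEmpty (WithEdgesRootDegree (n + 1) 0) :=
  ⟨fun ⟨t, ht, hr⟩ => by rw [eq_node_nil_of_rootDegree_eq_zero hr] at ht; simp at ht⟩

noncomputable def sumEquiv (n r : ℕ) :
    WithEdgesRootDegree n r ⊕ WithEdgesRootDegree (n + 1) (r + 2) ≃
      WithEdgesRootDegree (n + 1) (r + 1) :=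
  Equiv.ofBijective
    (Sum.elim (fun t => ⟨consLeaf t.1, by simp [t.2.1, t.2.2]⟩)
      (fun t => ⟨graftFirstChild t.1, by
        simp [edges_graftFirstChild, rootDegree_graftFirstChild, t.2.1, t.2.2]⟩))
    ⟨by
      refine Function.Injective.sumElim ?_ ?_ ?_
      · intro s t h
        exact Subtype.ext (consLeaf_injective (congrArg Subtype.val h))
      · intro s t h
        exact Subtype.ext (graftFirstChild_injOn (by simp [s.2.2]) (by simp [t.2.2])
          (congrArg Subtype.val h))
      · intro s t h
        exact consLeaf_ne_graftFirstChild s.1 (by simp [t.2.2]) (congrArg Subtype.val h),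
    by
      rintro ⟨t, ht, hr⟩
      rcases exists_consLeaf_or_graftFirstChild (t := t) (by omega) with ⟨s, rfl⟩ | ⟨s, hs, rfl⟩
      · exact ⟨.inl ⟨s, by simpa using ht, by simpa using hr⟩, rfl⟩
      · rw [edges_graftFirstChild hs] at ht
        rw [rootDegree_graftFirstChild hs] at hr
        exact ⟨.inr ⟨s, ht, by omega⟩, rfl⟩⟩

instance finite_withEdgesRootDegree : ∀ n r, Finite (WithEdgesRootDegree n r)
  | _, 0 => inferInstance
  | 0, r + 1 => have := isEmpty_withEdgesRootDegree_of_lt r.succ_pos; inferInstance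
  | n + 1, r + 1 =>
    if h : n < r then
      have := isEmpty_withEdgesRootDegree_of_lt (Nat.succ_lt_succ h); inferInstance
    else
      have := finite_withEdgesRootDegree n r
      have := finite_withEdgesRootDegree (n + 1) (r + 2)
      .of_equiv _ (sumEquiv n r)
termination_by n r => 2 * n - r

lemma card_succ_succ (n r : ℕ) :
    Nat.card (WithEdgesRootDegree (n + 1) (r + 1)) =
      Nat.card (WithEdgesRootDegree n r) + Nat.card (WithEdgesRootDegree (n + 1) (r + 2)) := by
  rw [← Nat.card_sum, Nat.card_congr (sumEquiv n r)]

lemma card_self (n : ℕ) : Nat.card (WithEdgesRootDegree n n) = 1 := by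
  induction n with
  | zero =>
    exact Nat.card_eq_one_iff_unique.mpr ⟨inferInstance, ⟨⟨node [], by simp⟩⟩⟩
  | succ n ih =>
    have := isEmpty_withEdgesRootDegree_of_lt (Nat.lt_succ_self (n + 1))
    rw [card_succ_succ, ih, Nat.card_of_isEmpty]

/-- `T(n, r) = C(2n-1-r, n-1) - C(2n-1-r, n)` at `n = r + k + 1` and root degree `r + 1`,
written without subtraction. -/
lemma card_add_choose (r k : ℕ) :
    Nat.card (WithEdgesRootDegree (r + k + 1) (r + 1)) + (r + 2 * k).choose (r + k + 1) =
      (r + 2 * k).choose (r + k) := by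
  induction k generalizing r with
  | zero => simp [card_self]
  | succ k ih =>
    induction r with
    | zero =>
      have h0 : Nat.card (WithEdgesRootDegree (k + 1) 0) = 0 :=
        @Nat.card_of_isEmpty _ (isEmpty_withEdgesRootDegree_succ_zero k)
      have hrec := card_succ_succ (k + 1) 0
      have ih₁ := ih 1
      have pascal₁ := Nat.choose_succ_succ' (2 * k + 1) (k + 1)
      have pascal₂ := Nat.choose_succ_succ' (2 * k + 1) k
      have hsymm := Nat.choose_symm_half k
      ring_nf at *
      omega
    | succ r ihr =>
      have hrec := card_succ_succ (r + k + 2) (r + 1)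
      have ih₂ := ih (r + 2)
      have pascal₁ := Nat.choose_succ_succ' (r + 2 * k + 2) (r + k + 2)
      have pascal₂ := Nat.choose_succ_succ' (r + 2 * k + 2) (r + k + 1)
      ring_nf at *
      omega

end PlaneTree

open PlaneTree in
/-- The number of plane trees on `n` edges with root degree `r`:
`n * T_n(r) = r * C(2n-1-r, n-1)` for `n ≥ r ≥ 1`. -/
theorem planeTree_count_rootDegree (n r : ℕ) (hr : 1 ≤ r) (hrn : r ≤ n) :
    n * Nat.card {T : PlaneTree // T.edges = n ∧ T.rootDegree = r} =
      r * Nat.choose (2 * n - 1 - r) (n - 1) := by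
  obtain ⟨s, rfl⟩ : ∃ s, r = s + 1 := ⟨r - 1, by omega⟩
  obtain ⟨k, rfl⟩ : ∃ k, n = s + k + 1 := ⟨n - (s + 1), by omega⟩
  have hcount := card_add_choose s k
  have hratio := Nat.choose_succ_right_eq (s + 2 * k) (s + k)
  rw [show s + 2 * k - (s + k) = k by omega] at hratio
  rw [show 2 * (s + k + 1) - 1 - (s + 1) = s + 2 * k by omega, Nat.add_sub_cancel]
  linear_combination (s + k + 1) * hcount - hratio
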